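/- Let n ≥ 2 and let M = (g_{αβ̄}) be an n×n matrix over ℂ depending on a small parameter ψ < 0 such that ψ²·g_{αβ̄} → L_{αβ̄} and, for (α,β) with α ≤ n−1, ψ·g_{αβ̄} → h_{αβ̄} as ψ → 0⁻, where L_{αβ̄} = (2n−2)v_α v̄_β with v = (0,…,0,1) and h_{αβ̄} are fixed complex numbers with h_{αβ̄} = −(2n−2)ψ_{αβ̄}(0) for α,β ≤ n−1, the matrix (ψ_{αβ̄}(0))_{α,β≤n−1} being invertible. Then ψ^{n+1}·det M converges to (−1)^{n−1}(2n−2)^n det(ψ_{αβ̄}(0))_{1≤α,β≤n−1} ≠ 0, and ψ^{−2}·(M^{−1})_{nn̄} converges to 1/(2n−2). -/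

import Mathlib

/-!
Rescale the rows of `M` by `ψ, …, ψ, ψ²`: the rescaled matrix converges to the matrix whose first
`n - 1` rows are those of `Q` and whose last row is `(2n - 2) eₙ`, so `ψ^{n+1} det M` converges to
`(2n - 2)` times the leading `(n - 1)`-minor of `Q`, i.e. to `(2n - 2) (-(2n - 2))^{n-1} det P`.
In the same way `ψ^{n-1}` times the leading minor of `M` converges to the leading minor of `Q`, and
Cramer's rule `(M⁻¹)ₙₙ = det(leading minor of M) / det M` gives the limit `1 / (2n - 2)` of
`ψ^{-2} (M⁻¹)ₙₙ`.
-/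

open Filter Topology

namespace Matrix

section LastRow

variable {k : ℕ}

theorem adjugate_last_last {R : Type*} [CommRing R] (A : Matrix (Fin (k + 1)) (Fin (k + 1)) R) :
    A.adjugate (Fin.last k) (Fin.last k) = (A.submatrix Fin.castSucc Fin.castSucc).det := by
  rw [adjugate_fin_succ_eq_det_submatrix, Fin.succAbove_last, Fin.val_last,
    Even.neg_one_pow ⟨k, rfl⟩, one_mul]

theorem det_updateRow_last_single {R : Type*} [CommRing R]
    (A : Matrix (Fin (k + 1)) (Fin (k + 1)) R) (c : R) :
    (A.updateRow (Fin.last k) (Pi.single (Fin.last k) c)).det =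
      c * (A.submatrix Fin.castSucc Fin.castSucc).det := by
  rw [← mul_one c, ← smul_eq_mul, Pi.single_smul', det_updateRow_smul, ← adjugate_apply,
    adjugate_last_last, smul_eq_mul, mul_one]

theorem inv_last_last {K : Type*} [Field K] (A : Matrix (Fin (k + 1)) (Fin (k + 1)) K) :
    A⁻¹ (Fin.last k) (Fin.last k) = (A.submatrix Fin.castSucc Fin.castSucc).det / A.det := by
  rw [inv_def, smul_apply, adjugate_last_last, Ring.inverse_eq_inv, smul_eq_mul, div_eq_inv_mul]

end LastRow

section Asymptotics

variable {𝕜 ι : Type*} [NormedField 𝕜] {l : Filter ι}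

theorem tendsto_prod_mul_det_of_tendsto_rowScaled {n : Type*} [Fintype n] [DecidableEq n]
    {M : ι → Matrix n n 𝕜} {d : ι → n → 𝕜} {B : Matrix n n 𝕜}
    (h : Tendsto (fun i => of fun a b => d i a * M i a b) l (𝓝 B)) :
    Tendsto (fun i => (∏ a, d i a) * (M i).det) l (𝓝 B.det) := by
  simpa only [Function.comp_def, id_eq, det_mul_column] using
    (continuous_id.matrix_det.tendsto B).comp h

variable {k : ℕ} {M : ι → Matrix (Fin (k + 1)) (Fin (k + 1)) 𝕜} {s : ι → 𝕜}
  {Q : Matrix (Fin (k + 1)) (Fin (k + 1)) 𝕜} {c : 𝕜}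

theorem tendsto_pow_mul_det_submatrix_castSucc
    (hinit : ∀ (a : Fin k) (b : Fin (k + 1)),
      Tendsto (fun i => s i * M i a.castSucc b) l (𝓝 (Q a.castSucc b))) :
    Tendsto (fun i => s i ^ k * ((M i).submatrix Fin.castSucc Fin.castSucc).det) l
      (𝓝 (Q.submatrix Fin.castSucc Fin.castSucc).det) := by
  have h := tendsto_prod_mul_det_of_tendsto_rowScaled (d := fun i _ => s i)
    (M := fun i => (M i).submatrix Fin.castSucc Fin.castSucc)
    (B := Q.submatrix Fin.castSucc Fin.castSucc)
    (tendsto_pi_nhds.2 fun a => tendsto_pi_nhds.2 fun b => hinit a b.castSucc)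
  simpa only [Finset.prod_const, Finset.card_univ, Fintype.card_fin] using h

theorem tendsto_pow_mul_det
    (hlast : ∀ b, Tendsto (fun i => s i ^ 2 * M i (Fin.last k) b) l
      (𝓝 ((Pi.single (Fin.last k) c : Fin (k + 1) → 𝕜) b)))
    (hinit : ∀ (a : Fin k) (b : Fin (k + 1)),
      Tendsto (fun i => s i * M i a.castSucc b) l (𝓝 (Q a.castSucc b))) :
    Tendsto (fun i => s i ^ (k + 2) * (M i).det) l
      (𝓝 (c * (Q.submatrix Fin.castSucc Fin.castSucc).det)) := by
  have hrows : Tendsto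
      (fun i => of fun a b => (Fin.lastCases (s i ^ 2) (fun _ => s i) a : 𝕜) * M i a b) l
      (𝓝 (Q.updateRow (Fin.last k) (Pi.single (Fin.last k) c))) := by
    refine tendsto_pi_nhds.2 fun a => tendsto_pi_nhds.2 fun b => ?_
    induction a using Fin.lastCases with
    | last => simpa using hlast b
    | cast a => simpa [updateRow_ne (Fin.castSucc_lt_last a).ne] using hinit a b
  have h := tendsto_prod_mul_det_of_tendsto_rowScaled hrows
  rw [det_updateRow_last_single] at h
  simpa [Fin.prod_univ_castSucc, pow_add] using h

theorem tendsto_inv_pow_two_mul_inv_last_last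
    (hlast : ∀ b, Tendsto (fun i => s i ^ 2 * M i (Fin.last k) b) l
      (𝓝 ((Pi.single (Fin.last k) c : Fin (k + 1) → 𝕜) b)))
    (hinit : ∀ (a : Fin k) (b : Fin (k + 1)),
      Tendsto (fun i => s i * M i a.castSucc b) l (𝓝 (Q a.castSucc b)))
    (hc : c ≠ 0) (hQ : (Q.submatrix Fin.castSucc Fin.castSucc).det ≠ 0) :
    Tendsto (fun i => (s i ^ 2)⁻¹ * (M i)⁻¹ (Fin.last k) (Fin.last k)) l (𝓝 c⁻¹) := by
  have h := (tendsto_pow_mul_det_submatrix_castSucc hinit).div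
    (tendsto_pow_mul_det hlast hinit) (mul_ne_zero hc hQ)
  rw [div_mul_cancel_right₀ hQ] at h
  refine h.congr fun i => ?_
  rw [Pi.div_apply, inv_last_last]
  rcases eq_or_ne (s i) 0 with hs | hs
  · simp [hs]
  · rw [pow_add, mul_assoc, mul_div_mul_left _ _ (pow_ne_zero k hs)]
    ring

end Asymptotics

end Matrix

/-- Abstract matrix-limit statement (Corollaries 2.7 and 2.8 of the paper):
for a family `M ψ` of invertible Hermitian matrices (`ψ < 0`, `ψ → 0⁻`) with
`ψ² M → (2n-2) v v*` (`v = e_n`) and `ψ M_{αβ} → Q_{αβ}` for `α ≤ n-1`, where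
`Q_{αβ} = -(2n-2) ψ_{αβ̄}(0)` for `α,β ≤ n-1` and `(ψ_{αβ̄}(0))_{α,β ≤ n-1}`
is invertible, one has
`ψ^{n+1} det M → (-1)^{n-1} (2n-2)^n det(ψ_{αβ̄}(0)) ≠ 0` and
`ψ^{-2} (M⁻¹)_{nn̄} → 1/(2n-2)`. -/
theorem stmt_18 (n : ℕ) (hn : 2 ≤ n)
    (M : ℝ → Matrix (Fin n) (Fin n) ℂ)
    (last : Fin n) (hlast : last = ⟨n - 1, by omega⟩)
    (hM2 : Tendsto (fun t : ℝ => ((t : ℂ) ^ 2) • M t) (nhdsWithin 0 (Set.Iio 0))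
      (nhds (fun α β => if α = last ∧ β = last then (2 * (n : ℂ) - 2) else 0)))
    (Q : Matrix (Fin n) (Fin n) ℂ)
    (hM1 : ∀ α β : Fin n, (α : ℕ) < n - 1 →
      Tendsto (fun t : ℝ => (t : ℂ) * M t α β) (nhdsWithin 0 (Set.Iio 0))
        (nhds (Q α β)))
    (P : Matrix (Fin (n - 1)) (Fin (n - 1)) ℂ) (hP : P.det ≠ 0)
    (hQ : ∀ α β : Fin n, (hα : (α : ℕ) < n - 1) → (hβ : (β : ℕ) < n - 1) →
      Q α β = -(2 * (n : ℂ) - 2) * P ⟨α, hα⟩ ⟨β, hβ⟩) :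
    Tendsto (fun t : ℝ => (t : ℂ) ^ (n + 1) * (M t).det)
        (nhdsWithin 0 (Set.Iio 0))
        (nhds ((-1) ^ (n - 1) * (2 * (n : ℂ) - 2) ^ n * P.det))
      ∧ (-1 : ℂ) ^ (n - 1) * (2 * (n : ℂ) - 2) ^ n * P.det ≠ 0
      ∧ Tendsto (fun t : ℝ => ((t : ℂ) ^ 2)⁻¹ * (M t)⁻¹ last last)
          (nhdsWithin 0 (Set.Iio 0)) (nhds (1 / (2 * (n : ℂ) - 2))) := by
  obtain ⟨k, rfl⟩ : ∃ k, n = k + 2 := ⟨n - 2, by omega⟩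
  obtain rfl : last = Fin.last (k + 1) := hlast
  set c : ℂ := 2 * ((k + 2 : ℕ) : ℂ) - 2
  have hc : c ≠ 0 := by
    have : c = ((2 * k + 2 : ℕ) : ℂ) := by push_cast [c]; ring
    exact this ▸ Nat.cast_ne_zero.2 (by omega)
  have hQP : Q.submatrix Fin.castSucc Fin.castSucc = (-c) • P := by
    ext a b
    exact hQ _ _ a.isLt b.isLt
  have hQdet : c * (Q.submatrix Fin.castSucc Fin.castSucc).det =
      (-1) ^ (k + 1) * c ^ (k + 2) * P.det := by
    rw [hQP, Matrix.det_smul, Fintype.card_fin, neg_pow]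
    ring
  have hlastRow : ∀ b, Tendsto (fun t : ℝ => (t : ℂ) ^ 2 * M t (Fin.last (k + 1)) b)
      (nhdsWithin 0 (Set.Iio 0))
      (𝓝 ((Pi.single (Fin.last (k + 1)) c : Fin (k + 2) → ℂ) b)) := fun b => by
    simpa [Pi.single_apply] using tendsto_pi_nhds.1 (tendsto_pi_nhds.1 hM2 (Fin.last _)) b
  have hinit : ∀ (a : Fin (k + 1)) b, Tendsto (fun t : ℝ => (t : ℂ) * M t a.castSucc b)
      (nhdsWithin 0 (Set.Iio 0)) (𝓝 (Q a.castSucc b)) := fun a b => hM1 _ _ a.isLt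
  have hQ0 : (Q.submatrix Fin.castSucc Fin.castSucc).det ≠ 0 := by
    rw [hQP, Matrix.det_smul]
    exact mul_ne_zero (pow_ne_zero _ (neg_ne_zero.2 hc)) hP
  refine ⟨hQdet ▸ Matrix.tendsto_pow_mul_det hlastRow hinit, hQdet ▸ mul_ne_zero hc hQ0, ?_⟩
  simpa only [one_div] using Matrix.tendsto_inv_pow_two_mul_inv_last_last hlastRow hinit hc hQ0
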